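/- arXiv:2310.00589 — 2 statements merged into one kernel-verified Lean document; each statement's English description precedes it below -/
import Mathlib

section
/- Let G^{(0)} be an undirected simple graph on vertex set {1,...,n+1} whose edges are partitioned into a solid edge set E_s (edges with both endpoints in {1,...,n}) and a broken edge set E_b (edges with one endpoint equal to n+1). Then the n-th transitive closure G^{(n)} is the complete graph on {1,...,n+1} if and only if both of the following hold: the graph on {1,...,n+1} with edge set E_s ∪ E_b is connected, and the graph on {1,...,n} with edge set E_s is connected. -/
open Matrix

/-!
Common setup: real (n+1)×(n+1) matrices (rows/columns indexed by `Fin (n+1)`,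
where index `i : Fin n` cast via `Fin.castSucc` plays the role of `i ∈ {1,…,n}`
and `Fin.last n` plays the role of the index `n+1`), the Lie bracket
`⁅A,B⁆ = A*B - B*A`, the matrices `Ω̃_{ij}` and `E_{k,n+1}`, the Lie algebra
`se(n)`, index sets `Λ`, pattern subspaces `B_Λ`, graphs with solid/broken
edges, the one-step transitive closure, and derived distributions.
-/

/-- The ambient space of real (n+1)×(n+1) matrices. -/
abbrev Mat (n : ℕ) := Matrix (Fin (n + 1)) (Fin (n + 1)) ℝ

/-- `Ω̃_{ij}`: 1 in entry (i,j), −1 in entry (j,i), 0 elsewhere (indices among 1,…,n). -/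
def Omega {n : ℕ} (i j : Fin n) : Mat n :=
  Matrix.single i.castSucc j.castSucc 1 - Matrix.single j.castSucc i.castSucc 1

/-- `E_{k,n+1}`: 1 in entry (k, n+1), 0 elsewhere. -/
def Ecol {n : ℕ} (k : Fin n) : Mat n :=
  Matrix.single k.castSucc (Fin.last n) 1

/-- The set se(n): matrices whose (n+1)-th row is zero and with
`M(i,j) = −M(j,i)` for all 1 ≤ i,j ≤ n. -/
def seSet (n : ℕ) : Set (Mat n) :=
  {M | (∀ j, M (Fin.last n) j = 0) ∧
    ∀ i j : Fin n, M i.castSucc j.castSucc = - M j.castSucc i.castSucc}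

/-- se(n) as a real subspace of the (n+1)×(n+1) matrices. -/
def seL (n : ℕ) : Submodule ℝ (Mat n) where
  carrier := seSet n
  add_mem' := by
    rintro a b ⟨ha1, ha2⟩ ⟨hb1, hb2⟩
    refine ⟨fun j => ?_, fun i j => ?_⟩
    · simp [Matrix.add_apply, ha1 j, hb1 j]
    · simp only [Matrix.add_apply, ha2 i j, hb2 i j]; ring
  zero_mem' := by
    refine ⟨fun j => ?_, fun i j => ?_⟩ <;> simp
  smul_mem' := by
    rintro c a ⟨ha1, ha2⟩
    refine ⟨fun j => ?_, fun i j => ?_⟩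
    · simp [Matrix.smul_apply, ha1 j]
    · simp only [Matrix.smul_apply, ha2 i j, smul_neg]

/-- Kronecker delta (real-valued). -/
def kron {n : ℕ} (p q : Fin n) : ℝ := if p = q then 1 else 0

/-- An index set Λ: a set of pairs (p,q) with p < q, i.e. a subset of
`{(i,j) : 1 ≤ i < j ≤ n} ∪ {(k, n+1) : 1 ≤ k ≤ n}`. -/
def IndexSet {n : ℕ} (Λ : Set (Fin (n + 1) × Fin (n + 1))) : Prop :=
  ∀ e ∈ Λ, e.1 < e.2

/-- The generating set `{Ω̃_{ij} : (i,j) ∈ Λ, j ≤ n} ∪ {E_{k,n+1} : (k,n+1) ∈ Λ}`. -/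
def genSet {n : ℕ} (Λ : Set (Fin (n + 1) × Fin (n + 1))) : Set (Mat n) :=
  {M | (∃ i j : Fin n, (i.castSucc, j.castSucc) ∈ Λ ∧ M = Omega i j) ∨
    (∃ k : Fin n, (k.castSucc, Fin.last n) ∈ Λ ∧ M = Ecol k)}

/-- The pattern subspace `B_Λ`. -/
def BLam {n : ℕ} (Λ : Set (Fin (n + 1) × Fin (n + 1))) : Submodule ℝ (Mat n) :=
  Submodule.span ℝ (genSet Λ)

attribute [instance] LieRing.ofAssociativeRing

/-- `B_Λ` generates `se(n)` as a Lie algebra: the smallest real subspace containing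
`B_Λ` and closed under the bracket (i.e. the Lie subalgebra generated by `B_Λ`)
equals `se(n)`. -/
def GeneratesSE (n : ℕ) (Λ : Set (Fin (n + 1) × Fin (n + 1))) : Prop :=
  (LieSubalgebra.lieSpan ℝ (Mat n) (BLam Λ : Set (Mat n)) : Set (Mat n)) = seSet n

/-- A graph on vertices {1,…,n+1} recorded by its solid and broken adjacency relations. -/
structure SBGraph (n : ℕ) where
  solid : Fin (n + 1) → Fin (n + 1) → Prop
  broken : Fin (n + 1) → Fin (n + 1) → Prop

/-- A well-formed solid/broken graph: simple and symmetric; solid edges have both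
endpoints among 1,…,n, broken edges have one endpoint equal to n+1. -/
def SBGraph.Good {n : ℕ} (G : SBGraph n) : Prop :=
  (∀ p q, G.solid p q → G.solid q p) ∧ (∀ p q, G.solid p q → p ≠ q) ∧
  (∀ p q, G.solid p q → p ≠ Fin.last n ∧ q ≠ Fin.last n) ∧
  (∀ p q, G.broken p q → G.broken q p) ∧ (∀ p q, G.broken p q → p ≠ q) ∧
  (∀ p q, G.broken p q → p = Fin.last n ∨ q = Fin.last n)

/-- The one-step closure: for distinct vertices i,j,k, add a solid edge {i,k} whenever
{i,j} and {j,k} are both solid, and a broken edge {i,k} whenever one of {i,j},{j,k} is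
solid and the other is broken (nothing is added when both are broken). -/
def SBGraph.step {n : ℕ} (G : SBGraph n) : SBGraph n where
  solid := fun i k => G.solid i k ∨
    (∃ j, i ≠ j ∧ j ≠ k ∧ i ≠ k ∧ G.solid i j ∧ G.solid j k)
  broken := fun i k => G.broken i k ∨
    (∃ j, i ≠ j ∧ j ≠ k ∧ i ≠ k ∧
      ((G.solid i j ∧ G.broken j k) ∨ (G.broken i j ∧ G.solid j k)))

/-- The l-th transitive closure `G^{(l)}`. -/
def SBGraph.closure {n : ℕ} (G : SBGraph n) (l : ℕ) : SBGraph n :=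
  (fun H => SBGraph.step H)^[l] G

/-- `G` is the complete graph on the n+1 vertices: every pair of distinct vertices
is joined by a (solid or broken) edge. -/
def SBGraph.IsComplete {n : ℕ} (G : SBGraph n) : Prop :=
  ∀ p q : Fin (n + 1), p ≠ q → G.solid p q ∨ G.broken p q

/-- The graph `G(B_Λ)` associated with a pattern: solid edges {i,j} for (i,j) ∈ Λ with
j ≤ n, broken edges {k,n+1} for (k,n+1) ∈ Λ. -/
def patternGraph {n : ℕ} (Λ : Set (Fin (n + 1) × Fin (n + 1))) : SBGraph n where
  solid := fun p q => ∃ i j : Fin n, (i.castSucc, j.castSucc) ∈ Λ ∧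
    ((p = i.castSucc ∧ q = j.castSucc) ∨ (p = j.castSucc ∧ q = i.castSucc))
  broken := fun p q => ∃ k : Fin n, (k.castSucc, Fin.last n) ∈ Λ ∧
    ((p = k.castSucc ∧ q = Fin.last n) ∨ (p = Fin.last n ∧ q = k.castSucc))

/-- One step of the derived-distribution construction:
`D ↦ D + span{[A₁,A₂] : A₁,A₂ ∈ D}`. -/
def derivedStep {n : ℕ} (D : Submodule ℝ (Mat n)) : Submodule ℝ (Mat n) :=
  D ⊔ Submodule.span ℝ {M | ∃ A B, A ∈ D ∧ B ∈ D ∧ M = A * B - B * A}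

/-- The i-th derived distribution `D^{(i)}`. -/
def derivedIter {n : ℕ} (D : Submodule ℝ (Mat n)) (i : ℕ) : Submodule ℝ (Mat n) :=
  (fun S => derivedStep S)^[i] D

/-!
Every edge of `G^{(l)}` is produced by a path of `G`, and a solid one by a solid path; since a
broken edge always ends at `n+1`, completeness of `G^{(n)}` forces both graphs to be connected.
Conversely, each step shortens solid paths by an edge, so `G^{(n-1)}` is solid-complete on
`{1,…,n}`; a broken edge `{k, n+1}`, which exists by connectivity, then combines with the solid
edges `{i, k}` in the last step.
-/

namespace SBGraph

variable {n : ℕ}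

def solidGraph (G : SBGraph n) : SimpleGraph (Fin n) :=
  SimpleGraph.fromRel fun i j => G.solid i.castSucc j.castSucc

def edgeGraph (G : SBGraph n) : SimpleGraph (Fin (n + 1)) :=
  SimpleGraph.fromRel fun p q => G.solid p q ∨ G.broken p q

theorem closure_succ (G : SBGraph n) (l : ℕ) : G.closure (l + 1) = (G.closure l).step :=
  Function.iterate_succ_apply' _ _ _

section Good

variable {G : SBGraph n}

theorem Good.solid_symm (hG : G.Good) {p q : Fin (n + 1)} (h : G.solid p q) : G.solid q p :=
  hG.1 p q h

theorem Good.solid_ne_last (hG : G.Good) {p q : Fin (n + 1)} (h : G.solid p q) :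
    p ≠ Fin.last n ∧ q ≠ Fin.last n :=
  hG.2.2.1 p q h

theorem Good.broken_symm (hG : G.Good) {p q : Fin (n + 1)} (h : G.broken p q) : G.broken q p :=
  hG.2.2.2.1 p q h

theorem Good.broken_ne (hG : G.Good) {p q : Fin (n + 1)} (h : G.broken p q) : p ≠ q :=
  hG.2.2.2.2.1 p q h

theorem Good.broken_last (hG : G.Good) {p q : Fin (n + 1)} (h : G.broken p q) :
    p = Fin.last n ∨ q = Fin.last n :=
  hG.2.2.2.2.2 p q h

theorem Good.not_broken_castSucc (hG : G.Good) (i j : Fin n) :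
    ¬ G.broken i.castSucc j.castSucc := fun h =>
  (hG.broken_last h).elim (Fin.castSucc_ne_last i) (Fin.castSucc_ne_last j)

theorem Good.solidGraph_adj (hG : G.Good) {i j : Fin n} :
    G.solidGraph.Adj i j ↔ i ≠ j ∧ G.solid i.castSucc j.castSucc := by
  simp only [solidGraph, SimpleGraph.fromRel_adj, ne_eq, and_congr_right_iff]
  exact fun _ => ⟨(·.elim id hG.solid_symm), Or.inl⟩

theorem Good.step (hG : G.Good) : G.step.Good := by
  refine ⟨?_, ?_, ?_, ?_, ?_, ?_⟩
  · rintro p q (h | ⟨j, hpj, hjq, hpq, hs₁, hs₂⟩)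
    · exact Or.inl (hG.solid_symm h)
    · exact Or.inr ⟨j, hjq.symm, hpj.symm, hpq.symm, hG.solid_symm hs₂, hG.solid_symm hs₁⟩
  · rintro p q (h | ⟨j, -, -, hpq, -⟩)
    · exact hG.2.1 p q h
    · exact hpq
  · rintro p q (h | ⟨j, -, -, -, hs₁, hs₂⟩)
    · exact hG.solid_ne_last h
    · exact ⟨(hG.solid_ne_last hs₁).1, (hG.solid_ne_last hs₂).2⟩
  · rintro p q (h | ⟨j, hpj, hjq, hpq, ⟨hs, hb⟩ | ⟨hb, hs⟩⟩)
    · exact Or.inl (hG.broken_symm h)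
    · exact Or.inr ⟨j, hjq.symm, hpj.symm, hpq.symm, Or.inr ⟨hG.broken_symm hb, hG.solid_symm hs⟩⟩
    · exact Or.inr ⟨j, hjq.symm, hpj.symm, hpq.symm, Or.inl ⟨hG.solid_symm hs, hG.broken_symm hb⟩⟩
  · rintro p q (h | ⟨j, -, -, hpq, -⟩)
    · exact hG.broken_ne h
    · exact hpq
  · rintro p q (h | ⟨j, -, -, -, ⟨hs, hb⟩ | ⟨hb, hs⟩⟩)
    · exact hG.broken_last h
    · exact .inr ((hG.broken_last hb).resolve_left (hG.solid_ne_last hs).2)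
    · exact .inl ((hG.broken_last hb).resolve_right (hG.solid_ne_last hs).1)

theorem Good.closure (hG : G.Good) (l : ℕ) : (G.closure l).Good := by
  induction l with
  | zero => exact hG
  | succ l ih => rw [closure_succ]; exact ih.step

end Good

variable (G : SBGraph n)

theorem closure_solid_mono {l m : ℕ} (hlm : l ≤ m) {p q : Fin (n + 1)}
    (h : (G.closure l).solid p q) : (G.closure m).solid p q := by
  induction hlm with
  | refl => exact h
  | step _ ih => rw [closure_succ]; exact Or.inl ih

theorem closure_broken_mono {l m : ℕ} (hlm : l ≤ m) {p q : Fin (n + 1)}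
    (h : (G.closure l).broken p q) : (G.closure m).broken p q := by
  induction hlm with
  | refl => exact h
  | step _ ih => rw [closure_succ]; exact Or.inl ih

theorem edgeGraph_reachable_of_closure (l : ℕ) {p q : Fin (n + 1)}
    (h : (G.closure l).solid p q ∨ (G.closure l).broken p q) : G.edgeGraph.Reachable p q := by
  induction l generalizing p q with
  | zero =>
    obtain rfl | hpq := eq_or_ne p q
    · exact .refl p
    · exact SimpleGraph.Adj.reachable (SimpleGraph.fromRel_adj _ _ _ |>.mpr ⟨hpq, Or.inl h⟩)
  | succ l ih =>
    rw [closure_succ] at h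
    rcases h with (h | ⟨j, -, -, -, hs₁, hs₂⟩) | (h | ⟨j, -, -, -, ⟨h₁, h₂⟩ | ⟨h₁, h₂⟩⟩)
    · exact ih (.inl h)
    · exact (ih (.inl hs₁)).trans (ih (.inl hs₂))
    · exact ih (.inr h)
    · exact (ih (.inl h₁)).trans (ih (.inr h₂))
    · exact (ih (.inr h₁)).trans (ih (.inl h₂))

variable {G}

theorem solidGraph_reachable_of_closure (hG : G.Good) (l : ℕ) {i j : Fin n}
    (h : (G.closure l).solid i.castSucc j.castSucc) : G.solidGraph.Reachable i j := by
  induction l generalizing i j with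
  | zero =>
    obtain rfl | hij := eq_or_ne i j
    · exact .refl i
    · exact SimpleGraph.Adj.reachable (hG.solidGraph_adj.mpr ⟨hij, h⟩)
  | succ l ih =>
    rw [closure_succ] at h
    rcases h with h | ⟨m, -, -, -, hs₁, hs₂⟩
    · exact ih h
    · obtain ⟨m, rfl⟩ := Fin.exists_castSucc_eq.mpr ((hG.closure l).solid_ne_last hs₁).2
      exact (ih hs₁).trans (ih hs₂)

-- A step in fact halves solid paths; shortening them by one edge is all that is needed.
theorem closure_solid_of_walk (hG : G.Good) {i j : Fin n} (w : G.solidGraph.Walk i j)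
    (hij : i ≠ j) (l : ℕ) (hw : w.length ≤ l + 1) : (G.closure l).solid i.castSucc j.castSucc := by
  induction w generalizing l with
  | nil => exact absurd rfl hij
  | @cons i m j hadj w ih =>
    obtain ⟨him, hs⟩ := hG.solidGraph_adj.mp hadj
    obtain rfl | hmj := eq_or_ne m j
    · exact G.closure_solid_mono l.zero_le hs
    cases l with
    | zero => exact absurd (w.eq_of_length_eq_zero (by simpa using hw)) hmj
    | succ l =>
      rw [closure_succ]
      exact Or.inr ⟨m.castSucc, Fin.castSucc_injective _ |>.ne him,
        Fin.castSucc_injective _ |>.ne hmj, Fin.castSucc_injective _ |>.ne hij,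
        G.closure_solid_mono l.zero_le hs, ih hmj l (by simpa using hw)⟩

theorem Good.broken_of_edgeGraph_adj_last (hG : G.Good) {p : Fin (n + 1)}
    (h : G.edgeGraph.Adj (Fin.last n) p) : G.broken p (Fin.last n) := by
  obtain ⟨-, (hs | hb) | (hs | hb)⟩ := h
  · exact absurd rfl (hG.solid_ne_last hs).1
  · exact hG.broken_symm hb
  · exact absurd rfl (hG.solid_ne_last hs).2
  · exact hb

theorem Good.exists_broken_last (hG : G.Good) (hconn : G.edgeGraph.Connected) (i : Fin n) :
    ∃ k : Fin n, G.broken k.castSucc (Fin.last n) := by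
  obtain ⟨w⟩ := hconn.preconnected (Fin.last n) i.castSucc
  have hb := hG.broken_of_edgeGraph_adj_last
    (w.adj_snd (w.not_nil_of_ne (Fin.castSucc_ne_last i).symm))
  obtain ⟨k, hk⟩ := Fin.exists_castSucc_eq.mpr (hG.broken_ne hb)
  exact ⟨k, hk ▸ hb⟩

theorem closure_solid_of_connected (hG : G.Good) (hconn : G.solidGraph.Connected) {i j : Fin n}
    (hij : i ≠ j) : (G.closure (n - 1)).solid i.castSucc j.castSucc :=
  (hconn.preconnected i j).elim_path fun w => closure_solid_of_walk hG w.1 hij _ <| by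
    have := w.2.length_lt
    rw [Fintype.card_fin] at this
    omega

theorem closure_broken_last (hG : G.Good) (hconn : G.solidGraph.Connected) {k : Fin n}
    (hk : G.broken k.castSucc (Fin.last n)) (i : Fin n) :
    (G.closure n).broken i.castSucc (Fin.last n) := by
  obtain rfl | hik := eq_or_ne i k
  · exact G.closure_broken_mono n.zero_le hk
  obtain ⟨l, rfl⟩ : ∃ l, n = l + 1 := ⟨n - 1, by have := i.pos; omega⟩
  rw [closure_succ]
  exact Or.inr ⟨k.castSucc, Fin.castSucc_injective _ |>.ne hik, Fin.castSucc_ne_last k,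
    Fin.castSucc_ne_last i, Or.inl ⟨closure_solid_of_connected hG hconn hik,
      G.closure_broken_mono l.zero_le hk⟩⟩

theorem isComplete_closure (hG : G.Good) (hedge : G.edgeGraph.Connected)
    (hsolid : G.solidGraph.Connected) : (G.closure n).IsComplete := by
  obtain ⟨k, hk⟩ := hG.exists_broken_last hedge hsolid.nonempty.some
  have hbroken := closure_broken_last hG hsolid hk
  intro p q hpq
  rcases p.eq_castSucc_or_eq_last with ⟨i, rfl⟩ | rfl <;>
    rcases q.eq_castSucc_or_eq_last with ⟨j, rfl⟩ | rfl
  · exact .inl (G.closure_solid_mono (n.sub_le 1)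
      (closure_solid_of_connected hG hsolid fun h => hpq (h ▸ rfl)))
  · exact .inr (hbroken i)
  · exact .inr ((hG.closure n).broken_symm (hbroken j))
  · exact absurd rfl hpq

theorem IsComplete.edgeGraph_connected {l : ℕ} (h : (G.closure l).IsComplete) :
    G.edgeGraph.Connected :=
  (SimpleGraph.connected_iff _).mpr ⟨fun p q => (eq_or_ne p q).elim (· ▸ .refl p)
    fun hpq => G.edgeGraph_reachable_of_closure l (h p q hpq), ⟨Fin.last n⟩⟩

theorem IsComplete.solidGraph_connected [Nonempty (Fin n)] (hG : G.Good) {l : ℕ}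
    (h : (G.closure l).IsComplete) : G.solidGraph.Connected := by
  refine (SimpleGraph.connected_iff _).mpr ⟨fun i j => ?_, inferInstance⟩
  obtain rfl | hij := eq_or_ne i j
  · exact .refl i
  obtain hs | hb := h i.castSucc j.castSucc (Fin.castSucc_injective _ |>.ne hij)
  · exact solidGraph_reachable_of_closure hG l hs
  · exact absurd hb ((hG.closure l).not_broken_castSucc i j)

end SBGraph

/-- For a solid/broken graph G⁽⁰⁾ on {1,…,n+1}, the n-th transitive
closure is the complete graph iff the graph with edge set E_s ∪ E_b is connected and
the graph on {1,…,n} with edge set E_s is connected. -/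
theorem stmt9 (n : ℕ) (hn : 1 ≤ n) (G : SBGraph n) (hG : G.Good) :
    (G.closure n).IsComplete ↔
      ((SimpleGraph.fromRel (fun p q : Fin (n + 1) => G.solid p q ∨ G.broken p q)).Connected ∧
       (SimpleGraph.fromRel (fun i j : Fin n => G.solid i.castSucc j.castSucc)).Connected) := by
  have : Nonempty (Fin n) := Fin.pos_iff_nonempty.mp hn
  exact ⟨fun h => ⟨h.edgeGraph_connected, h.solidGraph_connected hG⟩,
    fun ⟨hedge, hsolid⟩ => SBGraph.isComplete_closure hG hedge hsolid⟩
end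

section
/- An index set Λ̂ minimizes the cardinality |Λ| among all index sets Λ whose pattern subspace B_Λ generates se(n) as a Lie algebra, and B_{Λ̂} itself generates se(n) as a Lie algebra, if and only if the graph on vertex set {1,...,n+1} with edge set {{i,j} : (i,j) ∈ Λ̂} is a spanning tree of {1,...,n+1} whose restriction to the vertices {1,...,n} (i.e., the graph on {1,...,n} with edge set {{i,j} : (i,j) ∈ Λ̂, j ≤ n}) is a spanning tree of {1,...,n}. -/
open Matrix

attribute [local instance 100] LieRing.ofAssociativeRing

/-!
Generation of `se(n)` by `B_Λ` is equivalent to two conditions: the solid graph (the pairs of `Λ`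
inside `{1, …, n}`) is connected, and `Λ` contains some pair `(k, n+1)`. They suffice because
`[Ω̃_{ij}, Ω̃_{jk}] = Ω̃_{ik}` and `[Ω̃_{ij}, E_{j,n+1}] = E_{i,n+1}` propagate generators along
paths. They are necessary because otherwise every generator is block triangular for a suitable cut of
`{1, …, n+1}`, and block triangular matrices form a Lie subalgebra missing some `Ω̃_{ij}` or
`E_{k,n+1}`. A generating `Λ` therefore has at least `(n - 1) + 1` elements, the star at `1`
has exactly `n`, and equality forces both graphs to have one edge fewer than vertices, i.e. to be
spanning trees.
-/

section

variable {n : ℕ}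

lemma omega_apply (i j : Fin n) (p q : Fin (n + 1)) :
    Omega i j p q = (if i.castSucc = p ∧ j.castSucc = q then 1 else 0)
      - (if j.castSucc = p ∧ i.castSucc = q then 1 else 0) := rfl

lemma ecol_apply (k : Fin n) (p q : Fin (n + 1)) :
    Ecol k p q = if k.castSucc = p ∧ Fin.last n = q then 1 else 0 := rfl

lemma omega_self (i : Fin n) : Omega i i = 0 := sub_self _

lemma omega_swap (i j : Fin n) : Omega j i = -Omega i j := (neg_sub _ _).symm

lemma omega_apply_castSucc {i j : Fin n} (hij : i ≠ j) :
    Omega i j i.castSucc j.castSucc = 1 := by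
  simp [omega_apply, hij]

lemma omega_mem_seSet (i j : Fin n) : Omega i j ∈ seSet n := by
  refine ⟨fun q => ?_, fun a b => ?_⟩
  · simp [omega_apply]
  · simp only [omega_apply, Fin.castSucc_inj, and_comm (a := j = a), and_comm (a := i = a)]
    ring

lemma ecol_mem_seSet (k : Fin n) : Ecol k ∈ seSet n := by
  refine ⟨fun q => ?_, fun a b => ?_⟩
  · simp [ecol_apply]
  · simp [ecol_apply, eq_comm (a := Fin.last n)]

-- Summing over all ordered pairs counts each `Ω̃_{ij} = -Ω̃_{ji}` twice, hence the factor `2⁻¹`.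
lemma eq_sum_of_mem_seSet {M : Mat n} (hM : M ∈ seSet n) :
    M = (2⁻¹ : ℝ) • ∑ i, ∑ j, M i.castSucc j.castSucc • Omega i j
      + ∑ k, M k.castSucc (Fin.last n) • Ecol k := by
  ext p q
  induction p using Fin.lastCases with
  | last => simp [hM.1, Matrix.sum_apply, omega_apply, ecol_apply]
  | cast p =>
    induction q using Fin.lastCases with
    | last => simp [Matrix.sum_apply, omega_apply, ecol_apply]
    | cast q =>
      simp only [Matrix.add_apply, Matrix.smul_apply, Matrix.sum_apply, omega_apply, ecol_apply]
      simp [(Fin.castSucc_ne_last _).symm, mul_sub, Finset.sum_sub_distrib, ite_and, hM.2 q p]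
      ring

lemma lie_mem_seSet {A B : Mat n} (hA : A ∈ seSet n) (hB : B ∈ seSet n) :
    ⁅A, B⁆ ∈ seSet n := by
  have hblock : ∀ p q : Fin n, ⁅A, B⁆ p.castSucc q.castSucc =
      ∑ k : Fin n, (A p.castSucc k.castSucc * B k.castSucc q.castSucc
        - B p.castSucc k.castSucc * A k.castSucc q.castSucc) := by
    intro p q
    simp [Ring.lie_def, Matrix.mul_apply, Fin.sum_univ_castSucc, hA.1, hB.1]
  refine ⟨fun q => by simp [Ring.lie_def, Matrix.mul_apply, hA.1, hB.1], fun i j => ?_⟩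
  rw [hblock, hblock, ← Finset.sum_neg_distrib]
  refine Finset.sum_congr rfl fun k _ => ?_
  rw [hA.2 i k, hB.2 k j, hB.2 i k, hA.2 k j]
  ring

def seLieSubalgebra (n : ℕ) : LieSubalgebra ℝ (Mat n) :=
  { seL n with lie_mem' := lie_mem_seSet }

lemma lie_omega_omega {i j k : Fin n} (hij : i ≠ j) (hjk : j ≠ k) (hik : i ≠ k) :
    ⁅Omega i j, Omega j k⁆ = Omega i k := by
  simp only [Ring.lie_def, Omega, sub_mul, mul_sub, Matrix.single_mul_single_same,
    Matrix.single_mul_single_of_ne, ne_eq, Fin.castSucc_inj, hij, hjk, hik, Ne.symm hij,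
    Ne.symm hjk, Ne.symm hik, not_false_iff, mul_one]
  abel

lemma lie_omega_ecol {i j : Fin n} (hij : i ≠ j) : ⁅Omega i j, Ecol j⁆ = Ecol i := by
  simp only [Ring.lie_def, Omega, Ecol, sub_mul, mul_sub, Matrix.single_mul_single_same,
    Matrix.single_mul_single_of_ne, ne_eq, Fin.castSucc_inj, hij, (Fin.castSucc_ne_last _).symm,
    not_false_iff, mul_one]
  abel

section LieSubalgebra

variable {L : LieSubalgebra ℝ (Mat n)}

lemma omega_mem_trans {i j k : Fin n} (hij : Omega i j ∈ L) (hjk : Omega j k ∈ L) :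
    Omega i k ∈ L := by
  rcases eq_or_ne i j with rfl | hij'
  · exact hjk
  rcases eq_or_ne j k with rfl | hjk'
  · exact hij
  rcases eq_or_ne i k with rfl | hik
  · exact omega_self i ▸ L.zero_mem
  simpa [lie_omega_omega hij' hjk' hik] using L.lie_mem hij hjk

lemma omega_mem_of_reachable {G : SimpleGraph (Fin n)} (hG : ∀ i j, G.Adj i j → Omega i j ∈ L)
    {i j : Fin n} (h : G.Reachable i j) : Omega i j ∈ L := by
  rw [SimpleGraph.reachable_iff_reflTransGen] at h
  induction h with
  | refl => exact omega_self i ▸ L.zero_mem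
  | tail _ hjk ih => exact omega_mem_trans ih (hG _ _ hjk)

lemma ecol_mem_of_omega_mem {i j : Fin n} (hΩ : Omega i j ∈ L) (hE : Ecol j ∈ L) :
    Ecol i ∈ L := by
  rcases eq_or_ne i j with rfl | hij
  · exact hE
  simpa [lie_omega_ecol hij] using L.lie_mem hΩ hE

lemma seSet_subset_of_omega_mem_of_ecol_mem (hΩ : ∀ i j, Omega i j ∈ L) (hE : ∀ k, Ecol k ∈ L) :
    seSet n ⊆ L := by
  intro M hM
  rw [eq_sum_of_mem_seSet hM]
  exact add_mem (L.smul_mem _ (sum_mem fun i _ => sum_mem fun j _ => L.smul_mem _ (hΩ i j)))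
    (sum_mem fun k _ => L.smul_mem _ (hE k))

end LieSubalgebra

abbrev indexGraph (Λ : Set (Fin (n + 1) × Fin (n + 1))) : SimpleGraph (Fin (n + 1)) :=
  SimpleGraph.fromRel fun p q => (p, q) ∈ Λ

abbrev solidGraph (Λ : Set (Fin (n + 1) × Fin (n + 1))) : SimpleGraph (Fin n) :=
  SimpleGraph.fromRel fun i j => (i.castSucc, j.castSucc) ∈ Λ

def lastNeighbors (Λ : Set (Fin (n + 1) × Fin (n + 1))) : Set (Fin n) :=
  {k | (k.castSucc, Fin.last n) ∈ Λ}

lemma lieSpan_BLam_le_iff {Λ : Set (Fin (n + 1) × Fin (n + 1))} {K : LieSubalgebra ℝ (Mat n)} :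
    LieSubalgebra.lieSpan ℝ (Mat n) (BLam Λ : Set (Mat n)) ≤ K ↔ genSet Λ ⊆ K := by
  rw [LieSubalgebra.lieSpan_le]
  exact Submodule.span_le

lemma lieSpan_le_seLieSubalgebra (Λ : Set (Fin (n + 1) × Fin (n + 1))) :
    LieSubalgebra.lieSpan ℝ (Mat n) (BLam Λ : Set (Mat n)) ≤ seLieSubalgebra n := by
  refine lieSpan_BLam_le_iff.mpr ?_
  rintro M (⟨i, j, -, rfl⟩ | ⟨k, -, rfl⟩)
  · exact omega_mem_seSet i j
  · exact ecol_mem_seSet k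

lemma generatesSE_of_connected {Λ : Set (Fin (n + 1) × Fin (n + 1))}
    (hc : (solidGraph Λ).Connected) (hlast : (lastNeighbors Λ).Nonempty) : GeneratesSE n Λ := by
  set L := LieSubalgebra.lieSpan ℝ (Mat n) (BLam Λ : Set (Mat n))
  have hgen : genSet Λ ⊆ L := fun M hM =>
    LieSubalgebra.subset_lieSpan (Submodule.subset_span hM)
  have hΩ : ∀ i j, Omega i j ∈ L := by
    refine fun i j => omega_mem_of_reachable (fun i j hij => ?_) (hc i j)
    obtain ⟨-, hij | hji⟩ := hij
    · exact hgen (Or.inl ⟨i, j, hij, rfl⟩)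
    · rw [omega_swap j i]
      exact L.neg_mem (hgen (Or.inl ⟨j, i, hji, rfl⟩))
  obtain ⟨k₀, hk₀⟩ := hlast
  have hE : ∀ k, Ecol k ∈ L := fun k =>
    ecol_mem_of_omega_mem (hΩ k k₀) (hgen (Or.inr ⟨k₀, hk₀, rfl⟩))
  exact Set.Subset.antisymm (lieSpan_le_seLieSubalgebra Λ)
    (seSet_subset_of_omega_mem_of_ecol_mem hΩ hE)

lemma blockTriangular_of_generatesSE {α : Type*} [LinearOrder α] {b : Fin (n + 1) → α}
    {Λ : Set (Fin (n + 1) × Fin (n + 1))} (hgen : GeneratesSE n Λ)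
    (hΩ : ∀ i j : Fin n, (i.castSucc, j.castSucc) ∈ Λ → b i.castSucc = b j.castSucc)
    (hE : ∀ k ∈ lastNeighbors Λ, b k.castSucc ≤ b (Fin.last n))
    {M : Mat n} (hM : M ∈ seSet n) : M.BlockTriangular b := by
  let K := lieSubalgebraOfSubalgebra ℝ (Mat n) (Matrix.blockTriangularSubalgebra ℝ ℝ b)
  have hle : LieSubalgebra.lieSpan ℝ (Mat n) (BLam Λ : Set (Mat n)) ≤ K := by
    refine lieSpan_BLam_le_iff.mpr ?_
    rintro M (⟨i, j, hij, rfl⟩ | ⟨k, hk, rfl⟩)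
    · exact (Matrix.blockTriangular_single (hΩ i j hij).le 1).sub
        (Matrix.blockTriangular_single (hΩ i j hij).ge 1)
    · exact Matrix.blockTriangular_single (hE k hk) 1
  rw [← hgen] at hM
  exact hle hM

-- Otherwise every generator has zero last column, which `E_{1,n+1}` does not.
lemma lastNeighbors_nonempty_of_generatesSE (hn : 1 ≤ n) {Λ : Set (Fin (n + 1) × Fin (n + 1))}
    (hgen : GeneratesSE n Λ) : (lastNeighbors Λ).Nonempty := by
  by_contra hempty
  let k : Fin n := ⟨0, hn⟩
  have hblock := blockTriangular_of_generatesSE (b := Fin.lastCases 0 fun _ => 1) hgen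
    (fun i j _ => by simp) (fun m hm => (hempty ⟨m, hm⟩).elim) (ecol_mem_seSet k)
  simpa [ecol_apply] using hblock (i := k.castSucc) (j := Fin.last n) (by simp)

-- If `j` is not reachable from `i₀`, the matrices whose entries `(p, q)` vanish for `p` in the
-- component `C` of `i₀` and `q ∈ {1, …, n} \ C` are block triangular for the cut
-- `C ∪ {n+1}`; they contain every generator but not `Ω̃_{i₀ j}`.
lemma connected_of_generatesSE (hn : 1 ≤ n) {Λ : Set (Fin (n + 1) × Fin (n + 1))}
    (hgen : GeneratesSE n Λ) : (solidGraph Λ).Connected := by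
  classical
  let i₀ : Fin n := ⟨0, hn⟩
  refine (SimpleGraph.connected_iff_exists_forall_reachable _).mpr ⟨i₀, fun j => ?_⟩
  by_contra hj
  let b : Fin (n + 1) → ℕ :=
    Fin.lastCases 1 fun i => if (solidGraph Λ).Reachable i₀ i then 1 else 0
  have hΩ (i j : Fin n) (hij : (i.castSucc, j.castSucc) ∈ Λ) : b i.castSucc = b j.castSucc := by
    rcases eq_or_ne i j with rfl | hne
    · rfl
    have hadj : (solidGraph Λ).Adj i j := ⟨hne, Or.inl hij⟩
    simp only [b, Fin.lastCases_castSucc]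
    congr 1
    exact propext ⟨fun h => h.trans hadj.reachable, fun h => h.trans hadj.symm.reachable⟩
  have hE (k : Fin n) (_ : k ∈ lastNeighbors Λ) : b k.castSucc ≤ b (Fin.last n) := by
    simp only [b, Fin.lastCases_castSucc, Fin.lastCases_last]
    split_ifs <;> simp
  have hblock := blockTriangular_of_generatesSE hgen hΩ hE (omega_mem_seSet i₀ j)
  have hi₀j : i₀ ≠ j := by rintro rfl; exact hj (SimpleGraph.Reachable.refl _)
  simpa [omega_apply_castSucc hi₀j] using
    hblock (i := i₀.castSucc) (j := j.castSucc) (by simp [b, hj])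

theorem generatesSE_iff (hn : 1 ≤ n) (Λ : Set (Fin (n + 1) × Fin (n + 1))) :
    GeneratesSE n Λ ↔ (solidGraph Λ).Connected ∧ (lastNeighbors Λ).Nonempty :=
  ⟨fun h => ⟨connected_of_generatesSE hn h, lastNeighbors_nonempty_of_generatesSE hn h⟩,
    fun h => generatesSE_of_connected h.1 h.2⟩

lemma SimpleGraph.ncard_edgeSet_fromRel_of_lt {α : Type*} [LinearOrder α] {Λ : Set (α × α)}
    (h : ∀ e ∈ Λ, e.1 < e.2) :
    (SimpleGraph.fromRel fun p q => (p, q) ∈ Λ).edgeSet.ncard = Λ.ncard := by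
  have hedge :
      (SimpleGraph.fromRel fun p q => (p, q) ∈ Λ).edgeSet = (fun e => s(e.1, e.2)) '' Λ := by
    ext ⟨x, y⟩
    simp only [SimpleGraph.mem_edgeSet, SimpleGraph.fromRel_adj, Set.mem_image, Sym2.eq_iff]
    constructor
    · rintro ⟨-, hxy | hyx⟩
      · exact ⟨(x, y), hxy, Or.inl ⟨rfl, rfl⟩⟩
      · exact ⟨(y, x), hyx, Or.inr ⟨rfl, rfl⟩⟩
    · rintro ⟨⟨a, b⟩, hab, ⟨rfl, rfl⟩ | ⟨rfl, rfl⟩⟩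
      · exact ⟨(h _ hab).ne, Or.inl hab⟩
      · exact ⟨(h _ hab).ne', Or.inr hab⟩
  rw [hedge, Set.InjOn.ncard_image]
  rintro ⟨a, b⟩ hab ⟨c, d⟩ hcd hs
  rcases Sym2.eq_iff.mp hs with ⟨rfl, rfl⟩ | ⟨rfl, rfl⟩
  · rfl
  · exact ((h _ hab).trans (h _ hcd)).false.elim

lemma IndexSet.ncard_eq_edges_add_lastNeighbors {Λ : Set (Fin (n + 1) × Fin (n + 1))}
    (hΛ : IndexSet Λ) :
    Λ.ncard = (solidGraph Λ).edgeSet.ncard + (lastNeighbors Λ).ncard := by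
  let solid : Fin n × Fin n → Fin (n + 1) × Fin (n + 1) := Prod.map Fin.castSucc Fin.castSucc
  let broken : Fin n → Fin (n + 1) × Fin (n + 1) := fun k => (k.castSucc, Fin.last n)
  have hsolid : (solidGraph Λ).edgeSet.ncard = (Λ ∩ Set.range solid).ncard := by
    rw [← Set.ncard_preimage_of_injective_subset_range
      ((Fin.castSucc_injective n).prodMap (Fin.castSucc_injective n))
      Set.inter_subset_right, Set.preimage_inter_range]
    refine SimpleGraph.ncard_edgeSet_fromRel_of_lt (Λ := solid ⁻¹' Λ) fun e he => ?_
    simpa [solid] using hΛ _ he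
  have hbroken : (lastNeighbors Λ).ncard = (Λ ∩ Set.range broken).ncard := by
    rw [← Set.ncard_preimage_of_injective_subset_range
      (fun a b h => Fin.castSucc_injective n (Prod.ext_iff.mp h).1)
      Set.inter_subset_right, Set.preimage_inter_range]
    rfl
  have hdisj : Disjoint (Λ ∩ Set.range solid) (Λ ∩ Set.range broken) := by
    refine Set.disjoint_left.mpr ?_
    rintro _ ⟨-, ⟨i, j⟩, rfl⟩ ⟨-, k, hk⟩
    exact Fin.castSucc_ne_last j (Prod.ext_iff.mp hk).2.symm
  have hunion : Λ = (Λ ∩ Set.range solid) ∪ (Λ ∩ Set.range broken) := by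
    rw [← Set.inter_union_distrib_left, Set.left_eq_inter]
    rintro ⟨p, q⟩ hpq
    have hp : p ≠ Fin.last n := (hΛ _ hpq).ne_top
    induction q using Fin.lastCases with
    | last => exact Or.inr ⟨p.castPred hp, by simp [broken]⟩
    | cast j => exact Or.inl ⟨(p.castPred hp, j), by simp [solid]⟩
  rw [hsolid, hbroken, ← Set.ncard_union_eq hdisj, ← hunion]

lemma le_ncard_edgeSet_solidGraph_add_one {Λ : Set (Fin (n + 1) × Fin (n + 1))}
    (hc : (solidGraph Λ).Connected) : n ≤ (solidGraph Λ).edgeSet.ncard + 1 := by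
  simpa using hc.card_vert_le_card_edgeSet_add_one

lemma IndexSet.le_ncard_of_generatesSE (hn : 1 ≤ n) {Λ : Set (Fin (n + 1) × Fin (n + 1))}
    (hΛ : IndexSet Λ) (hgen : GeneratesSE n Λ) : n ≤ Λ.ncard := by
  obtain ⟨hc, hlast⟩ := (generatesSE_iff hn Λ).mp hgen
  have hsolid := le_ncard_edgeSet_solidGraph_add_one hc
  have hbroken := (Set.ncard_pos).mpr hlast
  rw [hΛ.ncard_eq_edges_add_lastNeighbors]
  omega

-- The pairs `(1, q)` for `2 ≤ q ≤ n + 1`, written with the 0-based indices of `Fin (n + 1)`.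
def starSet (n : ℕ) : Set (Fin (n + 1) × Fin (n + 1)) :=
  Set.range fun q : Fin n => (0, q.succ)

lemma indexSet_starSet : IndexSet (starSet n) := by
  rintro _ ⟨q, rfl⟩
  exact Fin.succ_pos q

lemma ncard_starSet : (starSet n).ncard = n := by
  rw [starSet, Set.ncard_range_of_injective, Nat.card_fin]
  exact fun a b h => Fin.succ_injective _ (Prod.ext_iff.mp h).2

lemma generatesSE_starSet (hn : 1 ≤ n) : GeneratesSE n (starSet n) := by
  let i₀ : Fin n := ⟨0, hn⟩
  refine (generatesSE_iff hn _).mpr ⟨(SimpleGraph.connected_iff_exists_forall_reachable _).mpr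
    ⟨i₀, fun j => ?_⟩, ⟨i₀, ?_⟩⟩
  · rcases eq_or_ne i₀ j with rfl | hj
    · rfl
    refine SimpleGraph.Adj.reachable ⟨hj, Or.inl ?_⟩
    have hj0 : j.castSucc ≠ 0 := fun h => hj (Fin.ext (by simpa [Fin.ext_iff] using h.symm))
    obtain ⟨q, hq⟩ := Fin.exists_succ_eq.mpr hj0
    exact ⟨q, Prod.ext (Fin.ext rfl) hq⟩
  · simpa [lastNeighbors, starSet, Fin.exists_succ_eq, i₀] using Nat.one_le_iff_ne_zero.mp hn

lemma connected_indexGraph {Λ : Set (Fin (n + 1) × Fin (n + 1))}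
    (hc : (solidGraph Λ).Connected) (hlast : (lastNeighbors Λ).Nonempty) :
    (indexGraph Λ).Connected := by
  obtain ⟨k₀, hk₀⟩ := hlast
  let f : solidGraph Λ →g indexGraph Λ :=
    ⟨Fin.castSucc, fun h => ⟨Fin.castSucc_injective n |>.ne h.1, h.2⟩⟩
  refine (SimpleGraph.connected_iff_exists_forall_reachable _).mpr ⟨Fin.last n, fun p => ?_⟩
  induction p using Fin.lastCases with
  | last => rfl
  | cast j =>
    have hadj : (indexGraph Λ).Adj (Fin.last n) k₀.castSucc :=
      ⟨(Fin.castSucc_ne_last k₀).symm, Or.inr hk₀⟩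
    exact hadj.reachable.trans ((hc k₀ j).map f)

lemma lastNeighbors_nonempty_of_connected (hn : 1 ≤ n) {Λ : Set (Fin (n + 1) × Fin (n + 1))}
    (hΛ : IndexSet Λ) (hc : (indexGraph Λ).Connected) : (lastNeighbors Λ).Nonempty := by
  have : Nontrivial (Fin (n + 1)) := Fin.nontrivial_iff_two_le.mpr (by omega)
  obtain ⟨p, hne, hp | hp⟩ := hc.preconnected.exists_adj_of_nontrivial (Fin.last n)
  · exact ((hΛ _ hp).trans_le (Fin.le_last p)).false.elim
  · exact ⟨p.castPred hne.symm, by simpa [lastNeighbors] using hp⟩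

end

/-- An index set Λ̂ minimizes |Λ| among index sets whose pattern
subspace generates se(n) as a Lie algebra (and itself generates se(n)) iff the graph on
{1,…,n+1} with edge set {{i,j} : (i,j) ∈ Λ̂} is a spanning tree of {1,…,n+1} whose
restriction to {1,…,n} is a spanning tree of {1,…,n}. -/
theorem stmt11 (n : ℕ) (hn : 1 ≤ n) (Λhat : Set (Fin (n + 1) × Fin (n + 1)))
    (hΛhat : IndexSet Λhat) :
    (GeneratesSE n Λhat ∧
      ∀ Λ : Set (Fin (n + 1) × Fin (n + 1)), IndexSet Λ → GeneratesSE n Λ →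
        Λhat.ncard ≤ Λ.ncard) ↔
    ((SimpleGraph.fromRel (fun p q : Fin (n + 1) => (p, q) ∈ Λhat)).Connected ∧
     (SimpleGraph.fromRel (fun p q : Fin (n + 1) => (p, q) ∈ Λhat)).IsAcyclic ∧
     (SimpleGraph.fromRel (fun i j : Fin n => (i.castSucc, j.castSucc) ∈ Λhat)).Connected ∧
     (SimpleGraph.fromRel (fun i j : Fin n => (i.castSucc, j.castSucc) ∈ Λhat)).IsAcyclic) := by
  show _ ↔ (indexGraph Λhat).Connected ∧ (indexGraph Λhat).IsAcyclic ∧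
    (solidGraph Λhat).Connected ∧ (solidGraph Λhat).IsAcyclic
  have hsplit := hΛhat.ncard_eq_edges_add_lastNeighbors
  have hedges : (indexGraph Λhat).edgeSet.ncard = Λhat.ncard :=
    SimpleGraph.ncard_edgeSet_fromRel_of_lt hΛhat
  rw [← and_assoc, ← SimpleGraph.isTree_iff, ← SimpleGraph.isTree_iff,
    SimpleGraph.isTree_iff_connected_and_card, SimpleGraph.isTree_iff_connected_and_card,
    generatesSE_iff hn]
  simp only [Nat.card_fin, Nat.card_coe_set_eq, hedges]
  constructor
  · rintro ⟨⟨hc, hlast⟩, hmin⟩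
    have hle := hmin _ indexSet_starSet (generatesSE_starSet hn)
    rw [ncard_starSet] at hle
    have hsolid := le_ncard_edgeSet_solidGraph_add_one hc
    have hbroken := (Set.ncard_pos).mpr hlast
    exact ⟨⟨connected_indexGraph hc hlast, by omega⟩, hc, by omega⟩
  · rintro ⟨⟨hfc, hfcard⟩, hsc, -⟩
    refine ⟨⟨hsc, lastNeighbors_nonempty_of_connected hn hΛhat hfc⟩, fun Λ hΛ hgen => ?_⟩
    have := hΛ.le_ncard_of_generatesSE hn hgen
    omega
end
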